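/- (Uniqueness of the safe strategy.) Let p : ℕ → [0,1] be any sequence and define the stream μ_0 = (3/4, 1/4, 0), μ_{i+1} = G_{p_i}(μ_i). If the second coordinate satisfies μ_i(B) = 1/4 for every i ≥ 0, then necessarily p_i = 2/(2^i + 2) for every i ≥ 0, and μ_i = (1/4 + 2^{-(i+1)}, 1/4, 1/2 − 2^{-(i+1)}) for every i ≥ 0. -/
import Mathlib


/-- `G p (a,b,c) = (p·a + c/2, (1−p)·a, b + c/2)`: one step of the running-example MDP
when action `a` is chosen in state `A` with probability `p` (and `b` with probability `1−p`). -/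
noncomputable def G (p : ℝ) : ℝ × ℝ × ℝ → ℝ × ℝ × ℝ :=
  fun q => (p * q.1 + q.2.2 / 2, (1 - p) * q.1, q.2.1 + q.2.2 / 2)

/-- **uniqueness of the safe strategy.** If the Markov strategy `p` keeps the
second coordinate of the stream `μ_0 = (3/4, 1/4, 0)`, `μ_{i+1} = G_{p_i}(μ_i)` equal to `1/4`
at every step, then `p_i = 2/(2^i + 2)` and
`μ_i = (1/4 + 2^{-(i+1)}, 1/4, 1/2 − 2^{-(i+1)})` for every `i`. -/
theorem safe_strategy_unique (p : ℕ → ℝ) (hp : ∀ i, 0 ≤ p i ∧ p i ≤ 1)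
    (μ : ℕ → ℝ × ℝ × ℝ) (h0 : μ 0 = (3 / 4, 1 / 4, 0))
    (hstep : ∀ i, μ (i + 1) = G (p i) (μ i))
    (hB : ∀ i, (μ i).2.1 = 1 / 4) :
    (∀ i, p i = 2 / (2 ^ i + 2)) ∧
    (∀ i, μ i = (1 / 4 + ((2 : ℝ) ^ (i + 1))⁻¹, 1 / 4, 1 / 2 - ((2 : ℝ) ^ (i + 1))⁻¹)) := by
  have hμ : ∀ i, μ i = (1 / 4 + ((2 : ℝ) ^ (i + 1))⁻¹, 1 / 4, 1 / 2 - ((2 : ℝ) ^ (i + 1))⁻¹) := by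
    intro i
    induction i with
    | zero => rw [h0]; norm_num
    | succ n ih =>
      have hBn := hB (n + 1)
      rw [hstep n, ih] at hBn ⊢
      have h2 : ((2 : ℝ) ^ (n + 1))⁻¹ ≠ 0 := by positivity
      have h2' : ((2 : ℝ) ^ (n + 1 + 1))⁻¹ = ((2 : ℝ) ^ (n + 1))⁻¹ / 2 := by
        rw [pow_succ]; field_simp
      simp only [G] at hBn ⊢
      -- from hBn: (1 - p n) * (1/4 + 2^{-(n+1)}) = 1/4, so p n * (1/4 + 2^{-(n+1)}) = 2^{-(n+1)}
      have key : p n * (1 / 4 + ((2 : ℝ) ^ (n + 1))⁻¹) = ((2 : ℝ) ^ (n + 1))⁻¹ := by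
        nlinarith [hBn]
      refine Prod.ext ?_ (Prod.ext ?_ ?_) <;> simp only <;> (try rw [h2']) <;> nlinarith [key]
  refine ⟨fun i => ?_, hμ⟩
  have hBn := hB (i + 1)
  rw [hstep i, hμ i] at hBn
  simp only [G] at hBn
  have hpos : (0 : ℝ) < 2 ^ i := by positivity
  have hinv : ((2 : ℝ) ^ (i + 1))⁻¹ = 1 / (2 * 2 ^ i) := by
    rw [pow_succ]; ring
  rw [hinv] at hBn
  field_simp at hBn ⊢
  nlinarith [hBn]
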